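/- The function g₁(x) = Σ_{k≥1} 2^{-k} ( 1/(1+2^k x) − x/(x+2^k) ) is convex, decreasing, and continuous on [0,1], with g₁(0) = 1 and g₁(1) = 0, and is continuously differentiable on every compact subset of (0,1]. -/

import Mathlib

/-!
Writing `c = 2 ^ (k + 1)`, the `k`-th term of the series is
`c⁻¹ (1 / (1 + c x) - x / (x + c)) = c⁻² (x + c⁻¹)⁻¹ + (x + c)⁻¹ - c⁻¹`,
a nonnegative combination of translates of `x ↦ x⁻¹` plus a constant, hence convex and
decreasing on `[0, ∞)`. The terms are bounded by `c⁻¹` there, so the series converges uniformly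
and the limit is continuous, convex and decreasing. On `[δ, ∞)` the derivatives of the terms
are bounded by `c⁻² (δ⁻² + 1)`, which is summable, so the series may be differentiated termwise
and its derivative is continuous on `(0, ∞)`.
-/

noncomputable def g₁ (x : ℝ) : ℝ :=
  ∑' k : ℕ, (2 ^ (k + 1) : ℝ)⁻¹ *
    (1 / (1 + 2 ^ (k + 1) * x) - x / (x + 2 ^ (k + 1)))

open Set

section Series

variable {ι : Type*}

theorem ConvexOn.tsum {E : Type*} [AddCommGroup E] [Module ℝ E] {s : Set E} {f : ι → E → ℝ}
    (hs : Convex ℝ s) (hf : ∀ i, ConvexOn ℝ s (f i))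
    (hsum : ∀ x ∈ s, Summable fun i => f i x) :
    ConvexOn ℝ s fun x => ∑' i, f i x := by
  refine ⟨hs, fun x hx y hy a b ha hb hab => ?_⟩
  have hxa := (hsum x hx).mul_left a
  have hyb := (hsum y hy).mul_left b
  calc ∑' i, f i (a • x + b • y)
      ≤ ∑' i, (a * f i x + b * f i y) :=
        Summable.tsum_le_tsum (fun i => (hf i).2 hx hy ha hb hab)
          (hsum _ (hs hx hy ha hb hab)) (hxa.add hyb)
    _ = a • ∑' i, f i x + b • ∑' i, f i y := by
        rw [Summable.tsum_add hxa hyb, tsum_mul_left, tsum_mul_left, smul_eq_mul, smul_eq_mul]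

theorem AntitoneOn.tsum {α : Type*} [Preorder α] {s : Set α} {f : ι → α → ℝ}
    (hf : ∀ i, AntitoneOn (f i) s) (hsum : ∀ x ∈ s, Summable fun i => f i x) :
    AntitoneOn (fun x => ∑' i, f i x) s :=
  fun _ hx _ hy hxy => Summable.tsum_le_tsum (fun i => hf i hx hy hxy) (hsum _ hy) (hsum _ hx)

theorem contDiffOn_one_tsum {𝕜 F : Type*} [NontriviallyNormedField 𝕜] [IsRCLikeNormedField 𝕜]
    [NormedAddCommGroup F] [NormedSpace 𝕜 F] [CompleteSpace F]
    {f f' : ι → 𝕜 → F} {u : ι → ℝ} {s : Set 𝕜} {x₀ : 𝕜}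
    (hs : IsOpen s) (hs' : IsPreconnected s) (hf : ∀ i x, x ∈ s → HasDerivAt (f i) (f' i x) x)
    (hf' : ∀ i, ContinuousOn (f' i) s) (hu : Summable u) (hf'u : ∀ i x, x ∈ s → ‖f' i x‖ ≤ u i)
    (hx₀ : x₀ ∈ s) (hf₀ : Summable fun i => f i x₀) :
    ContDiffOn 𝕜 1 (fun x => ∑' i, f i x) s := by
  have hderiv : ∀ x ∈ s, HasDerivAt (fun x => ∑' i, f i x) (∑' i, f' i x) x :=
    fun x hx => hasDerivAt_tsum_of_isPreconnected hu hs hs' hf hf'u hx₀ hf₀ hx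
  rw [← zero_add 1, contDiffOn_succ_iff_deriv_of_isOpen hs]
  refine ⟨fun x hx => (hderiv x hx).differentiableAt.differentiableWithinAt,
    fun h => by simp at h, ?_⟩
  rw [contDiffOn_zero]
  exact (continuousOn_tsum hf' hu hf'u).congr fun x hx => (hderiv x hx).deriv

end Series

theorem summable_inv_two_pow_succ_pow {m : ℕ} (hm : m ≠ 0) :
    Summable fun k : ℕ => (((2 : ℝ) ^ (k + 1)) ^ m)⁻¹ := by
  have h : (fun k : ℕ => (((2 : ℝ) ^ (k + 1)) ^ m)⁻¹) = fun k => (2 ^ m)⁻¹ * ((2 ^ m)⁻¹) ^ k := by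
    funext k
    rw [← pow_succ', ← pow_mul, mul_comm, pow_mul, inv_pow]
  rw [h]
  refine (summable_geometric_of_lt_one (by positivity) ?_).mul_left _
  exact inv_lt_one_of_one_lt₀ (one_lt_pow₀ one_lt_two hm)

theorem convexOn_inv_add {a : ℝ} (ha : 0 < a) : ConvexOn ℝ (Ici 0) fun x : ℝ => (x + a)⁻¹ := by
  have h := ((convexOn_zpow (𝕜 := ℝ) (-1)).translate_right a).subset
    (fun x (hx : x ∈ Ici (0 : ℝ)) => show 0 < a + x by linarith [mem_Ici.1 hx]) (convex_Ici 0)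
  simpa [Function.comp_def, add_comm] using h

section Term

variable {c x : ℝ}

noncomputable def g₁Term (c x : ℝ) : ℝ := c⁻¹ * (1 / (1 + c * x) - x / (x + c))

noncomputable def g₁TermDeriv (c x : ℝ) : ℝ := -(((1 + c * x) ^ 2)⁻¹ + ((x + c) ^ 2)⁻¹)

theorem g₁_eq_tsum (x : ℝ) : g₁ x = ∑' k : ℕ, g₁Term (2 ^ (k + 1)) x := rfl

theorem g₁Term_eq (hc : 0 < c) (hx : 0 ≤ x) :
    g₁Term c x = (c ^ 2)⁻¹ * (x + c⁻¹)⁻¹ + (x + c)⁻¹ - c⁻¹ := by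
  have : 0 < 1 + c * x := by positivity
  unfold g₁Term
  field_simp
  ring

theorem abs_g₁Term_le (hc : 0 < c) (hx : 0 ≤ x) : |g₁Term c x| ≤ c⁻¹ := by
  have h1 : 0 ≤ 1 / (1 + c * x) := by positivity
  have h2 : 1 / (1 + c * x) ≤ 1 := div_le_one_of_le₀ (by nlinarith) (by positivity)
  have h3 : 0 ≤ x / (x + c) := by positivity
  have h4 : x / (x + c) ≤ 1 := div_le_one_of_le₀ (by linarith) (by positivity)
  rw [g₁Term, abs_mul, abs_inv, abs_of_pos hc]
  exact mul_le_of_le_one_right (by positivity) (abs_sub_le_iff.2 ⟨by linarith, by linarith⟩)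

theorem convexOn_g₁Term (hc : 0 < c) : ConvexOn ℝ (Ici 0) (g₁Term c) := by
  have h := (((convexOn_inv_add (inv_pos.2 hc)).smul (inv_nonneg.2 (sq_nonneg c))).add
    (convexOn_inv_add hc)).add_const (-c⁻¹)
  exact h.congr fun x hx => by simp [g₁Term_eq hc hx, sub_eq_add_neg]

theorem antitoneOn_g₁Term (hc : 0 < c) : AntitoneOn (g₁Term c) (Ici 0) := by
  intro x (hx : 0 ≤ x) y (hy : 0 ≤ y) hxy
  rw [g₁Term_eq hc hx, g₁Term_eq hc hy]
  gcongr

theorem hasDerivAt_g₁Term (hc : 0 < c) (hx : 0 ≤ x) :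
    HasDerivAt (g₁Term c) (g₁TermDeriv c x) x := by
  have h1 : 1 + c * x ≠ 0 := by positivity
  have h2 : x + c ≠ 0 := by positivity
  have h := (((hasDerivAt_const x (1 : ℝ)).div (((hasDerivAt_id x).const_mul c).const_add 1) h1).sub
    ((hasDerivAt_id x).div ((hasDerivAt_id x).add_const c) h2)).const_mul c⁻¹
  refine h.congr_deriv ?_
  simp only [g₁TermDeriv, id]
  field_simp
  ring

theorem continuousOn_g₁TermDeriv (hc : 0 < c) : ContinuousOn (g₁TermDeriv c) (Ici 0) := by
  intro x (hx : 0 ≤ x)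
  have h1 : (1 + c * x) ^ 2 ≠ 0 := by positivity
  have h2 : (x + c) ^ 2 ≠ 0 := by positivity
  unfold g₁TermDeriv
  fun_prop (disch := assumption)

theorem abs_g₁TermDeriv_le {δ : ℝ} (hc : 0 < c) (hδ : 0 < δ) (hx : δ ≤ x) :
    |g₁TermDeriv c x| ≤ (c ^ 2)⁻¹ * (δ⁻¹ ^ 2 + 1) := by
  have h1 : ((1 + c * x) ^ 2)⁻¹ ≤ (c ^ 2)⁻¹ * δ⁻¹ ^ 2 := by
    rw [inv_pow, ← mul_inv, ← mul_pow]
    gcongr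
    nlinarith
  have h2 : ((x + c) ^ 2)⁻¹ ≤ (c ^ 2)⁻¹ := by
    gcongr
    linarith
  rw [g₁TermDeriv, abs_neg, abs_of_nonneg (by positivity)]
  linarith

end Term

theorem summable_g₁Term {x : ℝ} (hx : 0 ≤ x) : Summable fun k : ℕ => g₁Term (2 ^ (k + 1)) x :=
  .of_norm_bounded (by simpa using summable_inv_two_pow_succ_pow one_ne_zero)
    fun k => abs_g₁Term_le (by positivity) hx

theorem convexOn_g₁ : ConvexOn ℝ (Ici 0) g₁ :=
  ConvexOn.tsum (convex_Ici 0) (fun _ => convexOn_g₁Term (by positivity))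
    fun _ hx => summable_g₁Term hx

theorem antitoneOn_g₁ : AntitoneOn g₁ (Ici 0) :=
  AntitoneOn.tsum (fun _ => antitoneOn_g₁Term (by positivity)) fun _ hx => summable_g₁Term hx

theorem continuousOn_g₁ : ContinuousOn g₁ (Ici 0) :=
  continuousOn_tsum
    (fun _ x hx => (hasDerivAt_g₁Term (by positivity) hx).continuousAt.continuousWithinAt)
    (by simpa using summable_inv_two_pow_succ_pow one_ne_zero)
    fun _ x hx => abs_g₁Term_le (by positivity) hx

theorem contDiffOn_g₁_Ioi {δ : ℝ} (hδ : 0 < δ) : ContDiffOn ℝ 1 g₁ (Ioi δ) :=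
  contDiffOn_one_tsum isOpen_Ioi isPreconnected_Ioi
    (fun _ x hx => hasDerivAt_g₁Term (by positivity) (hδ.trans hx).le)
    (fun _ => (continuousOn_g₁TermDeriv (by positivity)).mono fun x hx => (hδ.trans hx).le)
    ((summable_inv_two_pow_succ_pow two_ne_zero).mul_right (δ⁻¹ ^ 2 + 1))
    (fun _ x hx => abs_g₁TermDeriv_le (by positivity) hδ hx.le)
    (lt_add_one δ) (summable_g₁Term (by linarith))

theorem contDiffOn_g₁ : ContDiffOn ℝ 1 g₁ (Ioi 0) :=
  contDiffOn_of_locally_contDiffOn fun x hx =>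
    ⟨Ioi (x / 2), isOpen_Ioi, mem_Ioi.2 (half_lt_self hx),
      (contDiffOn_g₁_Ioi (half_pos hx)).mono inter_subset_right⟩

theorem g₁_zero : g₁ 0 = 1 := by
  have h (k : ℕ) : g₁Term (2 ^ (k + 1)) 0 = 1 / 2 / 2 ^ k := by
    simp [g₁Term, pow_succ']
    ring
  rw [g₁_eq_tsum, tsum_congr h, tsum_geometric_two']

theorem g₁_one : g₁ 1 = 0 := by
  simp [g₁]

theorem stmt_19 :
    ConvexOn ℝ (Set.Icc (0:ℝ) 1) g₁ ∧ AntitoneOn g₁ (Set.Icc (0:ℝ) 1) ∧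
    ContinuousOn g₁ (Set.Icc (0:ℝ) 1) ∧ g₁ 0 = 1 ∧ g₁ 1 = 0 ∧
    ∀ K ⊆ Set.Ioc (0:ℝ) 1, IsCompact K → ContDiffOn ℝ 1 g₁ K :=
  ⟨convexOn_g₁.subset Icc_subset_Ici_self (convex_Icc 0 1),
    antitoneOn_g₁.mono Icc_subset_Ici_self, continuousOn_g₁.mono Icc_subset_Ici_self,
    g₁_zero, g₁_one, fun _ hK _ => contDiffOn_g₁.mono (hK.trans Ioc_subset_Ioi_self)⟩
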